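/- arXiv:2502.03288 — 4 statements merged into one kernel-verified Lean document; each statement's English description precedes it below -/
import Mathlib

section
/- Every vertex of an A-mediated graph lies in the convex hull of A, i.e., V ⊆ conv(A). -/
/-! A vertex `v ∉ A` is the midpoint of two distinct vertices, so it is not an extreme point of
`V`. Hence every extreme point of the finite set `V` lies in `A`, and by Krein–Milman `V` lies in
the convex hull of its extreme points. -/

open Set

section ExtremePoints

variable {𝕜 E : Type*} [Field 𝕜] [LinearOrder 𝕜] [IsStrictOrderedRing 𝕜] [AddCommGroup E]
  [Module 𝕜 E]

theorem eq_of_mem_extremePoints_of_two_smul_sub_mem {s : Set E} {x y : E}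
    (hx : x ∈ s.extremePoints 𝕜) (hy : y ∈ s) (hy' : (2 : 𝕜) • x - y ∈ s) : y = x := by
  have hmem : x ∈ openSegment 𝕜 (x - (x - y)) (x + (x - y)) := mem_openSegment_sub_add x (x - y)
  rw [sub_sub_cancel, ← add_sub_assoc, ← two_smul 𝕜 x] at hmem
  exact hx.2 hy hy' hmem

theorem extremePoints_subset_of_forall_exists_two_smul_sub_mem {s t : Set E}
    (h : ∀ x ∈ s, x ∉ t → ∃ y ∈ s, y ≠ x ∧ (2 : 𝕜) • x - y ∈ s) : s.extremePoints 𝕜 ⊆ t := by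
  intro x hx
  by_contra hxt
  obtain ⟨y, hy, hyx, hy'⟩ := h x hx.1 hxt
  exact hyx (eq_of_mem_extremePoints_of_two_smul_sub_mem hx hy hy')

end ExtremePoints

theorem Set.Finite.subset_convexHull_extremePoints {E : Type*} [AddCommGroup E] [Module ℝ E]
    [TopologicalSpace E] [T2Space E] [IsTopologicalAddGroup E] [ContinuousSMul ℝ E]
    [LocallyConvexSpace ℝ E] {s : Set E} (hs : s.Finite) :
    s ⊆ convexHull ℝ (s.extremePoints ℝ) := by
  have hext : (convexHull ℝ s).extremePoints ℝ ⊆ s.extremePoints ℝ := fun x hx =>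
    inter_extremePoints_subset_extremePoints_of_subset (subset_convexHull ℝ s)
      ⟨extremePoints_convexHull_subset hx, hx⟩
  calc s ⊆ convexHull ℝ s := subset_convexHull ℝ s
    _ = closure (convexHull ℝ ((convexHull ℝ s).extremePoints ℝ)) :=
      (closure_convexHull_extremePoints (hs.isCompact_convexHull ℝ) (convex_convexHull ℝ s)).symm
    _ ⊆ closure (convexHull ℝ (s.extremePoints ℝ)) := closure_mono (convexHull_mono hext)
    _ = convexHull ℝ (s.extremePoints ℝ) :=
      ((hs.subset extremePoints_subset).isClosed_convexHull ℝ).closure_eq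

theorem mediated_graph_vertices_in_convexHull_general {d : ℕ}
    (A V : Finset (Fin d → ℝ)) (E : Finset ((Fin d → ℝ) × (Fin d → ℝ)))
    (hdeg : ∀ v ∈ V, v ∉ A → (V.filter (fun w => (v, w) ∈ E)).card = 2)
    (hmid : ∀ v ∈ V, v ∉ A → ∀ w ∈ V, (v, w) ∈ E →
      (2 : ℝ) • v - w ∈ V ∧ (v, (2 : ℝ) • v - w) ∈ E) :
    (V : Set (Fin d → ℝ)) ⊆ convexHull ℝ (A : Set (Fin d → ℝ)) := by
  have hsplit : ∀ v ∈ (V : Set (Fin d → ℝ)), v ∉ (A : Set (Fin d → ℝ)) →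
      ∃ w ∈ (V : Set (Fin d → ℝ)), w ≠ v ∧ (2 : ℝ) • v - w ∈ (V : Set (Fin d → ℝ)) := by
    intro v hv hvA
    obtain ⟨w, hw, hwv⟩ := Finset.exists_mem_ne (by rw [hdeg v hv hvA]; norm_num) v
    obtain ⟨hwV, hvw⟩ := Finset.mem_filter.mp hw
    exact ⟨w, hwV, hwv, (hmid v hv hvA w hwV hvw).1⟩
  calc (V : Set (Fin d → ℝ)) ⊆ convexHull ℝ ((V : Set (Fin d → ℝ)).extremePoints ℝ) :=
        V.finite_toSet.subset_convexHull_extremePoints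
    _ ⊆ convexHull ℝ (A : Set (Fin d → ℝ)) :=
        convexHull_mono (extremePoints_subset_of_forall_exists_two_smul_sub_mem hsplit)

/-- Every vertex of an A-mediated graph lies in the convex hull of A. -/
theorem mediated_graph_vertices_in_convexHull {d : ℕ}
    (A V : Finset (Fin d → ℝ)) (E : Finset ((Fin d → ℝ) × (Fin d → ℝ)))
    (hAV : A ⊆ V) (hE : E ⊆ V ×ˢ V)
    (hdeg : ∀ v ∈ V, v ∉ A → (V.filter (fun w => (v, w) ∈ E)).card = 2)
    (hdegA : ∀ a ∈ A, (V.filter (fun w => (a, w) ∈ E)).card = 0)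
    (hmid : ∀ v ∈ V, v ∉ A → ∀ w ∈ V, (v, w) ∈ E →
      (2 : ℝ) • v - w ∈ V ∧ (v, (2 : ℝ) • v - w) ∈ E) :
    (V : Set (Fin d → ℝ)) ⊆ convexHull ℝ (A : Set (Fin d → ℝ)) :=
  mediated_graph_vertices_in_convexHull_general A V E hdeg hmid
end

section
/- Let G = (V, E) be an A-mediated graph where each v ∈ V \ A has outdegree exactly 2. Then the principal submatrix of the out-degree Laplacian L⁺(G) indexed by V \ A is invertible. -/
/-!
Extend a kernel vector `x` of `L⁺(G)_{V \ A}` by zero to a function on `V`. At each vertex of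
`V \ A` it equals the mean of its two out-neighbours, so a maximum principle holds: its maximum
over `V` is attained on `A`, where it vanishes. Otherwise the finite set of maximisers, which is
closed under taking out-neighbours, has an extreme point `v` (Krein–Milman); but `v` is the
midpoint of its out-neighbours `w ≠ v` and `2v - w`, both maximisers. Applied to `x` and `-x`
this gives `x = 0`.
-/

open Finset Matrix

theorem Finset.eq_of_card_mul_eq_sum_of_le {ι : Type*} {s : Finset ι} {f : ι → ℝ} {m : ℝ}
    (hsum : (#s : ℝ) * m = ∑ i ∈ s, f i) (hle : ∀ i ∈ s, f i ≤ m) :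
    ∀ i ∈ s, f i = m := by
  refine (sum_eq_sum_iff_of_le hle).1 ?_
  rw [sum_const, nsmul_eq_mul, hsum]

section MaximumPrinciple

variable {E : Type*} [AddCommGroup E] [Module ℝ E]

theorem eq_of_mem_extremePoints_of_reflect_mem {S : Set E} {v w : E}
    (hv : v ∈ S.extremePoints ℝ) (hw : w ∈ S) (hw' : (2 : ℝ) • v - w ∈ S) : w = v := by
  refine ((mem_extremePoints.1 hv).2 w hw _ hw' ⟨1 / 2, 1 / 2, by norm_num, by norm_num,
    by norm_num, ?_⟩).1
  rw [smul_sub, smul_smul, ← add_sub_assoc, add_sub_cancel_left]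
  norm_num

variable [TopologicalSpace E] [T2Space E] [IsTopologicalAddGroup E] [ContinuousSMul ℝ E]
  [LocallyConvexSpace ℝ E]

theorem exists_mem_le_of_card_mul_eq_sum (A V : Finset E) (N : E → Finset E)
    (hN : ∀ v ∈ V, v ∉ A → N v ⊆ V)
    (hreflect : ∀ v ∈ V, v ∉ A → ∀ w ∈ N v, (2 : ℝ) • v - w ∈ N v)
    (hne : ∀ v ∈ V, v ∉ A → ∃ w ∈ N v, w ≠ v) (X : E → ℝ)
    (hX : ∀ v ∈ V, v ∉ A → (#(N v) : ℝ) * X v = ∑ w ∈ N v, X w) :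
    ∀ u ∈ V, ∃ a ∈ A, X u ≤ X a := by
  intro u hu
  obtain ⟨b, hbV, hb⟩ := exists_max_image V X ⟨u, hu⟩
  set S := V.filter (fun v => X v = X b)
  by_cases hSA : ∃ a ∈ S, a ∈ A
  · obtain ⟨a, ha, haA⟩ := hSA
    exact ⟨a, haA, (mem_filter.1 ha).2 ▸ hb u hu⟩
  push Not at hSA
  have hclosed : ∀ v ∈ S, ∀ w ∈ N v, w ∈ S := by
    intro v hv w hw
    obtain ⟨hvV, hvX⟩ := mem_filter.1 hv
    have hNV := hN v hvV (hSA v hv)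
    have hwX := eq_of_card_mul_eq_sum_of_le (hX v hvV (hSA v hv))
      (fun w hw => hvX ▸ hb w (hNV hw)) w hw
    exact mem_filter.2 ⟨hNV hw, hwX.trans hvX⟩
  obtain ⟨v, hv⟩ := ((S : Set E).toFinite.isCompact).extremePoints_nonempty
    ⟨b, mem_filter.2 ⟨hbV, rfl⟩⟩
  have hvS : v ∈ S := mem_extremePoints.1 hv |>.1
  have hvV : v ∈ V := (mem_filter.1 hvS).1
  obtain ⟨w, hw, hwv⟩ := hne v hvV (hSA v hvS)
  exact (hwv (eq_of_mem_extremePoints_of_reflect_mem hv (hclosed v hvS w hw)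
    (hclosed v hvS _ (hreflect v hvV (hSA v hvS) w hw)))).elim

end MaximumPrinciple

theorem Matrix.mulVec_apply_eq_card_mul_sub_sum_extend {α : Type*} [DecidableEq α]
    {A V : Finset α} {E : Finset (α × α)} {L : Matrix {v // v ∈ V \ A} {v // v ∈ V \ A} ℝ}
    (hL : ∀ v w : {v // v ∈ V \ A},
      L v w = (if v.1 = w.1 then ((V.filter (fun u => (v.1, u) ∈ E)).card : ℝ) else 0)
        - (if (v.1, w.1) ∈ E then 1 else 0))
    (x : {v // v ∈ V \ A} → ℝ) (v : {v // v ∈ V \ A}) :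
    (L *ᵥ x) v = #(V.filter (fun w => (v.1, w) ∈ E)) * Function.extend Subtype.val x 0 v
      - ∑ w ∈ V.filter (fun w => (v.1, w) ∈ E), Function.extend Subtype.val x 0 w := by
  set X := Function.extend Subtype.val x 0
  have hX : ∀ w : {v // v ∈ V \ A}, X w = x w := Subtype.val_injective.extend_apply x 0
  have hX0 : ∀ w ∉ V \ A, X w = 0 := fun w hw =>
    Function.extend_apply' _ _ _ fun ⟨u, hu⟩ => hw (hu ▸ u.2)
  have hadj : ∑ w : {v // v ∈ V \ A}, (if (v.1, w.1) ∈ E then 1 else 0) * x w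
      = ∑ w ∈ V.filter (fun w => (v.1, w) ∈ E), X w := calc
    _ = ∑ w : {v // v ∈ V \ A}, if (v.1, w.1) ∈ E then X w else 0 := by
      simp only [ite_mul, one_mul, zero_mul, hX]
    _ = ∑ w ∈ V \ A, if (v.1, w) ∈ E then X w else 0 :=
      sum_coe_sort (V \ A) fun w => if (v.1, w) ∈ E then X w else 0
    _ = ∑ w ∈ (V \ A).filter (fun w => (v.1, w) ∈ E), X w := (sum_filter _ _).symm
    _ = _ := sum_subset (filter_subset_filter _ sdiff_subset) fun w hwN hw =>
      hX0 w fun hw' => hw (mem_filter.2 ⟨hw', (mem_filter.1 hwN).2⟩)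
  have hdiag : ∑ w : {v // v ∈ V \ A},
      (if v.1 = w.1 then (#(V.filter (fun u => (v.1, u) ∈ E)) : ℝ) else 0) * x w
      = #(V.filter (fun w => (v.1, w) ∈ E)) * x v := by
    simp only [← Subtype.ext_iff, ite_mul, zero_mul, sum_ite_eq, mem_univ, if_true]
  rw [mulVec, dotProduct]
  simp only [hL, sub_mul, sum_sub_distrib, hdiag, hadj, hX]

theorem mediated_graph_laplacian_submatrix_invertible_general {d : ℕ}
    (A V : Finset (Fin d → ℝ)) (E : Finset ((Fin d → ℝ) × (Fin d → ℝ)))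
    (hdeg : ∀ v ∈ V, v ∉ A → (V.filter (fun w => (v, w) ∈ E)).card = 2)
    (hmid : ∀ v ∈ V, v ∉ A → ∀ w ∈ V, (v, w) ∈ E →
      (2 : ℝ) • v - w ∈ V ∧ (v, (2 : ℝ) • v - w) ∈ E)
    (L : Matrix {v // v ∈ V \ A} {v // v ∈ V \ A} ℝ)
    (hL : ∀ v w : {v // v ∈ V \ A},
      L v w = (if v.1 = w.1 then ((V.filter (fun u => (v.1, u) ∈ E)).card : ℝ) else 0)
        - (if (v.1, w.1) ∈ E then 1 else 0)) :
    IsUnit L := by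
  set N := fun v => V.filter (fun w => (v, w) ∈ E)
  have hreflect : ∀ v ∈ V, v ∉ A → ∀ w ∈ N v, (2 : ℝ) • v - w ∈ N v :=
    fun v hv hvA w hw => mem_filter.2 (hmid v hv hvA w (mem_filter.1 hw).1 (mem_filter.1 hw).2)
  have hne : ∀ v ∈ V, v ∉ A → ∃ w ∈ N v, w ≠ v := fun v hv hvA =>
    exists_mem_ne (by rw [hdeg v hv hvA]; norm_num) v
  have hker_nonpos : ∀ x, L *ᵥ x = 0 → ∀ v, x v ≤ 0 := by
    intro x hx v
    have hX : ∀ u ∈ V, u ∉ A → (#(N u) : ℝ) * Function.extend Subtype.val x 0 u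
        = ∑ w ∈ N u, Function.extend Subtype.val x 0 w := fun u hu huA => by
      have hrow := congrFun hx ⟨u, mem_sdiff.2 ⟨hu, huA⟩⟩
      rwa [mulVec_apply_eq_card_mul_sub_sum_extend hL, Pi.zero_apply, sub_eq_zero] at hrow
    obtain ⟨a, haA, hle⟩ := exists_mem_le_of_card_mul_eq_sum A V N
      (fun _ _ _ => filter_subset _ _) hreflect hne _ hX v.1 (mem_sdiff.1 v.2).1
    rwa [Subtype.val_injective.extend_apply, Function.extend_apply' _ _ _
      fun ⟨u, hu⟩ => (mem_sdiff.1 (hu ▸ u.2)).2 haA] at hle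
  rw [isUnit_iff_isUnit_det, isUnit_iff_ne_zero, Ne, ← exists_mulVec_eq_zero_iff]
  rintro ⟨x, hx0, hx⟩
  exact hx0 (funext fun v => le_antisymm (hker_nonpos x hx v)
    (neg_nonpos.1 (hker_nonpos (-x) (by rw [mulVec_neg, hx, neg_zero]) v)))

/-- for an `A`-mediated graph in which every vertex of `V \ A` has
outdegree exactly `2`, the principal submatrix of the out-degree Laplacian
`L⁺(G) = D⁺(G) - adj(G)` indexed by `V \ A` is invertible. -/
theorem mediated_graph_laplacian_submatrix_invertible {d : ℕ}
    (A V : Finset (Fin d → ℝ)) (E : Finset ((Fin d → ℝ) × (Fin d → ℝ)))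
    (hAV : A ⊆ V) (hE : E ⊆ V ×ˢ V)
    (hdeg : ∀ v ∈ V, v ∉ A → (V.filter (fun w => (v, w) ∈ E)).card = 2)
    (hdegA : ∀ a ∈ A, (V.filter (fun w => (a, w) ∈ E)).card = 0)
    (hmid : ∀ v ∈ V, v ∉ A → ∀ w ∈ V, (v, w) ∈ E →
      (2 : ℝ) • v - w ∈ V ∧ (v, (2 : ℝ) • v - w) ∈ E)
    (L : Matrix {v // v ∈ V \ A} {v // v ∈ V \ A} ℝ)
    (hL : ∀ v w : {v // v ∈ V \ A},
      L v w = (if v.1 = w.1 then ((V.filter (fun u => (v.1, u) ∈ E)).card : ℝ) else 0)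
        - (if (v.1, w.1) ∈ E then 1 else 0)) :
    IsUnit L :=
  mediated_graph_laplacian_submatrix_invertible_general A V E hdeg hmid L hL
end

section
/- Let G = (V, E) be an A-mediated graph with each v ∈ V \ A having outdegree exactly 2. Then no nonempty subset U ⊆ V \ A has the property that for every v ∈ U, both out-neighbors of v lie in U. Equivalently, no principal submatrix of L⁺(G) indexed by a nonempty subset of V \ A has every row summing to 0. -/
/-!
Choose `v ∈ U` of maximal Euclidean norm. Since `v` has two out-neighbours, one of them, `w`,
differs from `v`, and `2v - w` is an out-neighbour too; closedness puts both in `U`. By the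
parallelogram law `‖w‖² + ‖2v - w‖² = 2‖v‖² + 2‖w - v‖² > 2‖v‖²`, so one of them is longer
than `v`, contradicting maximality.
-/

theorem two_mul_norm_sq_lt_norm_sq_add {F : Type*} [NormedAddCommGroup F] [InnerProductSpace ℝ F]
    {v w : F} (hwv : w ≠ v) : 2 * ‖v‖ ^ 2 < ‖w‖ ^ 2 + ‖(2 : ℝ) • v - w‖ ^ 2 := by
  have hpar := parallelogram_law_with_norm ℝ v (w - v)
  have hreflect : v - (w - v) = (2 : ℝ) • v - w := by rw [two_smul]; abel
  rw [add_sub_cancel, hreflect] at hpar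
  have hpos : 0 < ‖w - v‖ := norm_pos_iff.mpr (sub_ne_zero.mpr hwv)
  nlinarith

theorem Finset.eq_empty_of_forall_isMidpoint {E : Type*} [AddCommGroup E] [Module ℝ E]
    (f : E → ℝ) (hf : ∀ v w, w ≠ v → 2 * f v < f w + f ((2 : ℝ) • v - w)) {U : Finset E}
    (hU : ∀ v ∈ U, ∃ w ∈ U, w ≠ v ∧ (2 : ℝ) • v - w ∈ U) : U = ∅ := by
  by_contra hne
  obtain ⟨v, hvU, hvmax⟩ := U.exists_max_image f (Finset.nonempty_iff_ne_empty.mpr hne)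
  obtain ⟨w, hwU, hwv, hw'U⟩ := hU v hvU
  linarith [hf v w hwv, hvmax w hwU, hvmax _ hw'U]

theorem two_mul_euclideanNormSq_lt {d : ℕ} {v w : Fin d → ℝ} (hwv : w ≠ v) :
    2 * ‖WithLp.toLp 2 v‖ ^ 2 < ‖WithLp.toLp 2 w‖ ^ 2 + ‖WithLp.toLp 2 ((2 : ℝ) • v - w)‖ ^ 2 := by
  rw [WithLp.toLp_sub, WithLp.toLp_smul]
  exact two_mul_norm_sq_lt_norm_sq_add ((WithLp.toLp_injective 2).ne hwv)

theorem mediated_graph_no_closed_subset_general {d : ℕ}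
    (A V : Finset (Fin d → ℝ)) (E : Finset ((Fin d → ℝ) × (Fin d → ℝ)))
    (hdeg : ∀ v ∈ V, v ∉ A → (V.filter (fun w => (v, w) ∈ E)).card = 2)
    (hmid : ∀ v ∈ V, v ∉ A → ∀ w ∈ V, (v, w) ∈ E →
      (2 : ℝ) • v - w ∈ V ∧ (v, (2 : ℝ) • v - w) ∈ E) :
    ¬ ∃ U : Finset (Fin d → ℝ), U ⊆ V \ A ∧ U.Nonempty ∧
      ∀ v ∈ U, ∀ w ∈ V, (v, w) ∈ E → w ∈ U := by
  rintro ⟨U, hUVA, hUne, hclosed⟩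
  refine hUne.ne_empty (U.eq_empty_of_forall_isMidpoint (fun x => ‖WithLp.toLp 2 x‖ ^ 2)
    (fun _ _ => two_mul_euclideanNormSq_lt) fun v hvU => ?_)
  obtain ⟨hvV, hvA⟩ := Finset.mem_sdiff.mp (hUVA hvU)
  obtain ⟨w, hw, hwv⟩ := Finset.exists_mem_ne (by rw [hdeg v hvV hvA]; norm_num) v
  obtain ⟨hwV, hvw⟩ := Finset.mem_filter.mp hw
  obtain ⟨hw'V, hvw'⟩ := hmid v hvV hvA w hwV hvw
  exact ⟨w, hclosed v hvU w hwV hvw, hwv, hclosed v hvU _ hw'V hvw'⟩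

/-- in an `A`-mediated graph where every vertex of `V \ A` has outdegree
exactly `2`, no nonempty `U ⊆ V \ A` is closed under taking out-neighbors
(equivalently, no nonempty principal submatrix of `L⁺(G)` indexed inside `V \ A`
has all row sums zero). -/
theorem mediated_graph_no_closed_subset {d : ℕ}
    (A V : Finset (Fin d → ℝ)) (E : Finset ((Fin d → ℝ) × (Fin d → ℝ)))
    (hAV : A ⊆ V) (hE : E ⊆ V ×ˢ V)
    (hdeg : ∀ v ∈ V, v ∉ A → (V.filter (fun w => (v, w) ∈ E)).card = 2)
    (hmid : ∀ v ∈ V, v ∉ A → ∀ w ∈ V, (v, w) ∈ E →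
      (2 : ℝ) • v - w ∈ V ∧ (v, (2 : ℝ) • v - w) ∈ E) :
    ¬ ∃ U : Finset (Fin d → ℝ), U ⊆ V \ A ∧ U.Nonempty ∧
      ∀ v ∈ U, ∀ w ∈ V, (v, w) ∈ E → w ∈ U :=
  mediated_graph_no_closed_subset_general A V E hdeg hmid
end

section
/- For any directed graph G where every vertex v in a distinguished subset S has outdegree exactly 2 (counting out-neighbors in the full vertex set) and such that no nonempty subset U ⊆ S satisfies 'both out-neighbors of each u ∈ U lie in U', the matrix M indexed by S with M_{vv} = 2 and M_{vw} = −1 if (v,w) is an arc with w ∈ S, 0 otherwise, is invertible and the entries of M⁻¹ are nonnegative. -/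
/-!
A discrete minimum principle. Suppose `M x ≥ 0` and `x` attains a negative minimum `m` at `v`.
Then `(M x)_v = ∑_w M_vw (x_w - m) + m ∑_w M_vw` is a sum of non-positive terms, because the
off-diagonal entries are `≤ 0` and, with at most two `-1`s per row, the row sums are `≥ 0`.
So the row sum at `v` vanishes, which forces both out-neighbours of `v` into `S \ {v}`, and they
also carry the value `m`. The minimisers then form a nonempty subset of `S` closed under
out-neighbours, which is excluded. Hence `M x ≥ 0 → x ≥ 0`: applied to `±` a kernel vector this
gives invertibility, and applied to the columns of `M⁻¹` (as `M (M⁻¹ e_j) = e_j ≥ 0`) it gives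
nonnegativity of the inverse.
-/

open Finset Matrix

namespace Matrix

variable {n R : Type*} [Fintype n] [Field R] [LinearOrder R] [IsStrictOrderedRing R]

theorem isUnit_and_inv_nonneg_of_monotone [DecidableEq n] {M : Matrix n n R}
    (hM : ∀ x : n → R, 0 ≤ M *ᵥ x → 0 ≤ x) : IsUnit M ∧ ∀ i j, 0 ≤ M⁻¹ i j := by
  have hunit : IsUnit M := by
    refine mulVec_injective_iff_isUnit.mp fun x y hxy ↦ ?_
    have hzero : M *ᵥ (x - y) = 0 := by rw [mulVec_sub, hxy, sub_self]
    have h₁ := hM (x - y) hzero.ge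
    have h₂ := hM (y - x) (by rw [← neg_sub, mulVec_neg, hzero, neg_zero])
    exact sub_eq_zero.mp (le_antisymm (fun i ↦ by simpa using h₂ i) h₁)
  refine ⟨hunit, fun i j ↦ ?_⟩
  have hcol : M *ᵥ M⁻¹.col j = Pi.single j 1 := by
    rw [← mulVec_single_one, mulVec_mulVec,
      mul_nonsing_inv M ((isUnit_iff_isUnit_det M).mp hunit), one_mulVec]
  exact hM _ (hcol ▸ Pi.single_nonneg.mpr zero_le_one) i

theorem sum_row_eq_zero_and_eq_of_mulVec_nonneg_of_isMin {M : Matrix n n R} {x : n → R} {i : n}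
    (hoff : ∀ k, k ≠ i → M i k ≤ 0) (hrow : 0 ≤ ∑ k, M i k) (hmin : ∀ k, x i ≤ x k)
    (hneg : x i < 0) (hx : 0 ≤ (M *ᵥ x) i) :
    ∑ k, M i k = 0 ∧ ∀ k, M i k < 0 → x k = x i := by
  have hsplit : (M *ᵥ x) i = ∑ k, M i k * (x k - x i) + x i * ∑ k, M i k := by
    simp only [mulVec, dotProduct, mul_sub, sum_sub_distrib, ← sum_mul]
    ring
  have hterm : ∀ k, M i k * (x k - x i) ≤ 0 := fun k ↦ by
    rcases eq_or_ne k i with rfl | hk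
    · simp
    · exact mul_nonpos_of_nonpos_of_nonneg (hoff k hk) (sub_nonneg.mpr (hmin k))
  have hlast : x i * ∑ k, M i k ≤ 0 := mul_nonpos_of_nonpos_of_nonneg hneg.le hrow
  have hsum : ∑ k, M i k * (x k - x i) = 0 := by
    linarith [sum_nonpos fun k (_ : k ∈ univ) ↦ hterm k]
  have hrow_zero : x i * ∑ k, M i k = 0 := by linarith
  refine ⟨(mul_eq_zero.mp hrow_zero).resolve_left hneg.ne, fun k hk ↦ ?_⟩
  have hk0 := (sum_eq_zero_iff_of_nonpos fun k _ ↦ hterm k).mp hsum k (mem_univ k)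
  linarith [(mul_eq_zero.mp hk0).resolve_left hk.ne]

end Matrix

section ArcMatrix

variable {ι : Type*} [DecidableEq ι] (S : Finset ι) (arc : ι → ι → Prop) [DecidableRel arc]

def arcMatrix : Matrix S S ℝ := fun v w ↦ if v = w then 2 else if arc v w then -1 else 0

variable {S arc}

theorem arcMatrix_nonpos_of_ne {v w : S} (h : w ≠ v) : arcMatrix S arc v w ≤ 0 := by
  unfold arcMatrix
  split_ifs <;> simp_all

theorem sum_arcMatrix_row (v : S) :
    ∑ w, arcMatrix S arc v w = 2 - #{w ∈ S | w ≠ (v : ι) ∧ arc v w} := by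
  have hterm : ∀ w : ι, (if v = w then 2 else if arc v w then -1 else 0 : ℝ) =
      (if (v : ι) = w then 2 else 0) - (if w ≠ (v : ι) ∧ arc v w then 1 else 0) := fun w ↦ by
    rcases eq_or_ne (v : ι) w with h | h
    · simp [h]
    · by_cases h' : arc v w <;> simp [h, h', h.symm]
  calc ∑ w, arcMatrix S arc v w
      = ∑ w ∈ S, (if v = w then 2 else if arc v w then -1 else 0 : ℝ) := by
        rw [← sum_coe_sort S]
        simp only [arcMatrix, Subtype.ext_iff]
    _ = 2 - #{w ∈ S | w ≠ (v : ι) ∧ arc v w} := by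
        simp only [hterm, sum_sub_distrib, sum_ite_eq, v.2, if_true, sum_boole]

variable [Fintype ι]

theorem filter_ne_arc_subset (v : S) :
    {w ∈ S | w ≠ (v : ι) ∧ arc v w} ⊆ ({w | arc v w} : Finset ι) :=
  fun _ hw ↦ mem_filter.mpr ⟨mem_univ _, (mem_filter.mp hw).2.2⟩

theorem sum_arcMatrix_row_nonneg {v : S} (hdeg : #{w | arc v w} ≤ 2) :
    0 ≤ ∑ w, arcMatrix S arc v w := by
  rw [sum_arcMatrix_row, sub_nonneg]
  exact_mod_cast (card_le_card (filter_ne_arc_subset v)).trans hdeg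

theorem mem_and_ne_of_sum_arcMatrix_row_eq_zero {v : S} (hdeg : #{w | arc v w} = 2)
    (hzero : ∑ w, arcMatrix S arc v w = 0) {w : ι} (hw : arc v w) : w ∈ S ∧ w ≠ v := by
  have hcard : #{w ∈ S | w ≠ (v : ι) ∧ arc v w} = 2 := by
    rw [sum_arcMatrix_row, sub_eq_zero] at hzero
    exact_mod_cast hzero.symm
  have heq := eq_of_subset_of_card_le (filter_ne_arc_subset v) (by rw [hcard, hdeg])
  have hmem : w ∈ ({w ∈ S | w ≠ (v : ι) ∧ arc v w} : Finset ι) :=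
    heq ▸ mem_filter.mpr ⟨mem_univ _, hw⟩
  exact ⟨(mem_filter.mp hmem).1, (mem_filter.mp hmem).2.1⟩

theorem arc_closed_minimizers_of_arcMatrix_mulVec_nonneg
    (hdeg : ∀ v ∈ S, #{w | arc v w} = 2) {x : S → ℝ} (hx : 0 ≤ arcMatrix S arc *ᵥ x) {i : S}
    (hmin : ∀ k, x i ≤ x k) (hneg : x i < 0) (u : S) (hxu : x u = x i) {w : ι}
    (hw : arc u w) : ∃ hwS : w ∈ S, x ⟨w, hwS⟩ = x i := by
  obtain ⟨hrow, hmin_eq⟩ := Matrix.sum_row_eq_zero_and_eq_of_mulVec_nonneg_of_isMin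
    (fun k hk ↦ arcMatrix_nonpos_of_ne hk) (sum_arcMatrix_row_nonneg (hdeg u u.2).le)
    (hxu ▸ hmin) (hxu ▸ hneg) (hx u)
  obtain ⟨hwS, hwu⟩ := mem_and_ne_of_sum_arcMatrix_row_eq_zero (hdeg u u.2) hrow hw
  have hentry : arcMatrix S arc u ⟨w, hwS⟩ < 0 := by
    simp [arcMatrix, Subtype.ext_iff, hwu.symm, hw]
  exact ⟨hwS, (hmin_eq _ hentry).trans hxu⟩

theorem nonneg_of_arcMatrix_mulVec_nonneg (hdeg : ∀ v ∈ S, #{w | arc v w} = 2)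
    (hU : ¬ ∃ U : Finset ι, U ⊆ S ∧ U.Nonempty ∧ ∀ u ∈ U, ∀ w, arc u w → w ∈ U)
    {x : S → ℝ} (hx : 0 ≤ arcMatrix S arc *ᵥ x) : 0 ≤ x := by
  by_contra hx_neg
  obtain ⟨j, hj⟩ : ∃ j, x j < 0 := by simpa [Pi.le_def] using hx_neg
  obtain ⟨i, -, hi⟩ := exists_min_image univ x ⟨j, mem_univ j⟩
  have hmin : ∀ k, x i ≤ x k := fun k ↦ hi k (mem_univ k)
  refine hU ⟨({k | x k = x i} : Finset S).map (Function.Embedding.subtype (· ∈ S)), ?_,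
    ⟨i, by simp⟩, fun u hu w hw ↦ ?_⟩
  · intro v hv
    obtain ⟨v, -, rfl⟩ := mem_map.mp hv
    exact v.2
  · obtain ⟨u, hxu, rfl⟩ : ∃ u' : S, x u' = x i ∧ (u' : ι) = u := by simpa using hu
    simpa using arc_closed_minimizers_of_arcMatrix_mulVec_nonneg hdeg hx hmin
      ((hmin j).trans_lt hj) u hxu hw

end ArcMatrix

/-- Reznick's Lemma 4.3: if every `v ∈ S` has exactly two out-neighbors
(in the whole vertex set) and no nonempty `U ⊆ S` is closed under taking out-neighbors,
then the matrix indexed by `S` with diagonal `2` and `-1` at arcs inside `S` is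
invertible with entrywise nonnegative inverse. -/
theorem laplacian_type_matrix_invertible_nonneg_inverse {ι : Type*} [Fintype ι]
    [DecidableEq ι]
    (S : Finset ι) (arc : ι → ι → Prop) [DecidableRel arc]
    (hdeg : ∀ v ∈ S, (Finset.univ.filter (fun w => arc v w)).card = 2)
    (hU : ¬ ∃ U : Finset ι, U ⊆ S ∧ U.Nonempty ∧
      ∀ u ∈ U, ∀ w, arc u w → w ∈ U)
    (M : Matrix {v // v ∈ S} {v // v ∈ S} ℝ)
    (hM : ∀ v w : {v // v ∈ S},
      M v w = if v = w then 2 else if arc v.1 w.1 then -1 else 0) :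
    IsUnit M ∧ ∀ i j, 0 ≤ M⁻¹ i j := by
  obtain rfl : M = arcMatrix S arc := Matrix.ext hM
  exact isUnit_and_inv_nonneg_of_monotone fun _ ↦ nonneg_of_arcMatrix_mulVec_nonneg hdeg hU
end
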